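/- Let Sh = sw_π H(2,4) be the Shrikhande graph, obtained from the Hamming graph H(2,4) by Godsil–McKay switching with respect to the partition π = {C, V \ C}, where C = {(x,x) : x ∈ [4]}. For every n ≥ 0, the Doob graph D(1,n) = Sh □ K₄ □ ⋯ □ K₄ (n copies of K₄) is isomorphic to sw_Π H(n+2, 4), where H(n+2,4) is realized as H(2,4) □ H(n,4) and Π = {C × {w} : w ∈ V(H(n,4))} ∪ {(V \ C) × V(H(n,4))} is the induced Godsil–McKay partition. -/

import Mathlib

open Classical Matrix Kronecker

/-- The number of neighbors of `x` inside the set `c`. -/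
noncomputable def nbrCount {V : Type*} (G : SimpleGraph V) (x : V) (c : Finset V) : ℕ :=
  (c.filter fun y => G.Adj x y).card

/-- `{C i} ∪ {D}` is a partition of the vertex set (all cells nonempty, pairwise
disjoint, covering). -/
def IsPartitionWithCell {V ι : Type*} (C : ι → Finset V) (D : Finset V) : Prop :=
  (∀ i, (C i).Nonempty) ∧ D.Nonempty ∧
    Pairwise (fun i j => Disjoint (C i) (C j)) ∧
    (∀ i, Disjoint (C i) D) ∧ ∀ x : V, x ∈ D ∨ ∃ i, x ∈ C i

/-- The family of cells `C` is equitable for `G` : any two vertices of a cell `C i`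
have the same number of neighbors in each cell `C j`. -/
def IsEquitableOn {V ι : Type*} (G : SimpleGraph V) (C : ι → Finset V) : Prop :=
  ∀ i j, ∀ x ∈ C i, ∀ y ∈ C i, nbrCount G x (C j) = nbrCount G y (C j)

/-- Every vertex of `D` has `0`, `|C i|/2` or `|C i|` neighbors in each cell `C i`. -/
def GMhalf {V ι : Type*} (G : SimpleGraph V) (C : ι → Finset V) (D : Finset V) : Prop :=
  ∀ x ∈ D, ∀ i, nbrCount G x (C i) = 0 ∨ 2 * nbrCount G x (C i) = (C i).card ∨
    nbrCount G x (C i) = (C i).card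

/-- `π = {C₁, …, C_t, D}` is a Godsil–McKay partition of `G` with Godsil–McKay cell `D`. -/
def IsGMPartition {V ι : Type*} (G : SimpleGraph V) (C : ι → Finset V) (D : Finset V) : Prop :=
  IsPartitionWithCell C D ∧ IsEquitableOn G C ∧ GMhalf G C D

/-- The graph obtained from `G` by Godsil–McKay switching with respect to the
partition `{C₁, …, C_t, D}` : adjacency and nonadjacency between `x ∈ D` and the
vertices of `C i` are interchanged whenever `x` has exactly `|C i|/2` neighbors in `C i`. -/
def GMswitch {V ι : Type*} (G : SimpleGraph V) (C : ι → Finset V) (D : Finset V) :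
    SimpleGraph V where
  Adj x y := x ≠ y ∧ Xor' (G.Adj x y)
    (∃ i, (x ∈ D ∧ y ∈ C i ∧ 2 * nbrCount G x (C i) = (C i).card) ∨
          (y ∈ D ∧ x ∈ C i ∧ 2 * nbrCount G y (C i) = (C i).card))
  symm := by
    refine ⟨?_⟩
    rintro x y ⟨hne, h⟩
    refine ⟨hne.symm, ?_⟩
    have h1 : (G.Adj y x) = (G.Adj x y) := propext (G.adj_comm y x)
    have h2 : (∃ i, (y ∈ D ∧ x ∈ C i ∧ 2 * nbrCount G y (C i) = (C i).card) ∨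
          (x ∈ D ∧ y ∈ C i ∧ 2 * nbrCount G x (C i) = (C i).card)) =
        (∃ i, (x ∈ D ∧ y ∈ C i ∧ 2 * nbrCount G x (C i) = (C i).card) ∨
          (y ∈ D ∧ x ∈ C i ∧ 2 * nbrCount G y (C i) = (C i).card)) :=
      propext (exists_congr fun i => or_comm)
    rw [h1, h2]
    exact h
  loopless := ⟨by rintro x ⟨hne, -⟩; exact hne rfl⟩

/-- The adjacency matrix of a graph, with rational entries. -/
noncomputable def adjM {V : Type*} (G : SimpleGraph V) : Matrix V V ℚ :=
  Matrix.of fun x y => if G.Adj x y then 1 else 0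

/-- The all-one matrix. -/
def allOnes (V : Type*) : Matrix V V ℚ := Matrix.of fun _ _ => 1

/-- The switching matrix `Q` of the partition `{C₁, …, C_t, D}` :
`Q x y = 2/|C i| - δ_{x y}` if `x, y ∈ C i`, `Q x y = δ_{x y}` if `x, y ∈ D`,
and `Q x y = 0` otherwise. -/
noncomputable def switchMatrix {V ι : Type*} (C : ι → Finset V) (D : Finset V) :
    Matrix V V ℚ :=
  Matrix.of fun x y =>
    if h : ∃ i, x ∈ C i ∧ y ∈ C i then
      2 / ((C h.choose).card : ℚ) - (if x = y then 1 else 0)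
    else if x ∈ D ∧ y ∈ D then (if x = y then 1 else 0) else 0

/-- The characteristic matrix of a family of cells: `S x i = 1` iff `x ∈ C i`. -/
noncomputable def charMat {V ι : Type*} (C : ι → Finset V) : Matrix V ι ℚ :=
  Matrix.of fun x i => if x ∈ C i then 1 else 0

/-- `A₀ = I`, `A₁ = A(G)`, `A₂ = J - I - A(G)`. -/
noncomputable def stdMats {V : Type*} [DecidableEq V] (G : SimpleGraph V) :
    Fin 3 → Matrix V V ℚ :=
  ![1, adjM G, allOnes V - 1 - adjM G]

/-- The three basic relations: `i = 0` : equality, `i = 1` : adjacency,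
`i = 2` : distinct nonadjacency. -/
def relOfIdx {V : Type*} (G : SimpleGraph V) (i : Fin 3) (x y : V) : Prop :=
  (i = 0 ∧ x = y) ∨ (i = 1 ∧ G.Adj x y) ∨ (i = 2 ∧ x ≠ y ∧ ¬ G.Adj x y)

lemma relOfIdx_symm {V : Type*} {G : SimpleGraph V} {i : Fin 3} {x y : V}
    (h : relOfIdx G i x y) : relOfIdx G i y x := by
  rcases h with ⟨hi, h⟩ | ⟨hi, h⟩ | ⟨hi, h1, h2⟩
  · exact Or.inl ⟨hi, h.symm⟩
  · exact Or.inr (Or.inl ⟨hi, h.symm⟩)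
  · exact Or.inr (Or.inr ⟨hi, h1.symm, fun hadj => h2 hadj.symm⟩)

/-- The unified graph product of type `[0 s₀₁ s₀₂; s₁₀ s₁₁ s₁₂; s₂₀ s₂₁ s₂₂]` :
the graph on `V × W` whose adjacency matrix is `Σ_{i,j} s i j • (A_i ⊗ B_j)`. -/
def unifiedProd {V W : Type*} (G : SimpleGraph V) (H : SimpleGraph W)
    (s : Fin 3 → Fin 3 → ℚ) : SimpleGraph (V × W) where
  Adj p q := p ≠ q ∧ ∃ i j, s i j = 1 ∧ relOfIdx G i p.1 q.1 ∧ relOfIdx H j p.2 q.2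
  symm := by
    refine ⟨?_⟩
    rintro p q ⟨hne, i, j, hs, hi, hj⟩
    exact ⟨hne.symm, i, j, hs, relOfIdx_symm hi, relOfIdx_symm hj⟩
  loopless := ⟨by rintro p ⟨hne, -⟩; exact hne rfl⟩

/-- The Hamming graph `H(2,4) = K₄ □ K₄`. -/
def H24 : SimpleGraph (Fin 4 × Fin 4) :=
  SimpleGraph.boxProd (⊤ : SimpleGraph (Fin 4)) (⊤ : SimpleGraph (Fin 4))

/-- The diagonal `C = {(x,x) : x ∈ [4]}` of the vertex set of `H(2,4)`. -/
def diagC : Finset (Fin 4 × Fin 4) := Finset.univ.filter fun p => p.1 = p.2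

/-- The Shrikhande graph, obtained from `H(2,4)` by Godsil–McKay switching with
respect to the partition `{C, V \ C}`. -/
def Shrikhande : SimpleGraph (Fin 4 × Fin 4) :=
  GMswitch H24 (fun _ : Fin 1 => diagC) diagCᶜ

/-- The Hamming graph `H(n,4)`, the Cartesian product of `n` copies of `K₄`. -/
def HamGraph (n : ℕ) : SimpleGraph (Fin n → Fin 4) where
  Adj f g := ∃ i, f i ≠ g i ∧ ∀ j, j ≠ i → f j = g j
  symm := by
    refine ⟨?_⟩
    rintro f g ⟨i, h1, h2⟩
    exact ⟨i, h1.symm, fun j hj => (h2 j hj).symm⟩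
  loopless := ⟨by rintro f ⟨i, h1, -⟩; exact h1 rfl⟩

/-! A vertex `(x, w)` with `x ∈ D` has as many neighbours in the cell `C i ×ˢ {w}` of `G □ H`
as `x` has in `C i`, and none in `C i ×ˢ {v}` for `v ≠ w`, because `x ∉ C i`. Hence switching
`G □ H` with respect to the lifted partition interchanges adjacency exactly on the pairs
`((x, w), (y, w))` for which switching `G` does so on `(x, y)`: the two graphs are equal, and the
isomorphism is the identity. -/

namespace GMswitch

variable {V W ι : Type*}

def SwitchesAt (G : SimpleGraph V) (C : ι → Finset V) (D : Finset V) (x y : V) : Prop :=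
  ∃ i, x ∈ D ∧ y ∈ C i ∧ 2 * nbrCount G x (C i) = (C i).card

lemma adj_iff {G : SimpleGraph V} {C : ι → Finset V} {D : Finset V} {x y : V} :
    (GMswitch G C D).Adj x y ↔
      x ≠ y ∧ Xor (G.Adj x y) (SwitchesAt G C D x y ∨ SwitchesAt G C D y x) := by
  simp only [SwitchesAt, ← exists_or]
  exact Iff.rfl

variable {G : SimpleGraph V} {H : SimpleGraph W}

lemma nbrCount_boxProd_prod_singleton_self (x : V) (w : W) (c : Finset V) :
    nbrCount (G □ H) (x, w) (c ×ˢ {w}) = nbrCount G x c := by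
  have : (c ×ˢ {w}).filter ((G □ H).Adj (x, w)) = c.filter (G.Adj x) ×ˢ {w} := by
    ext ⟨y, u⟩
    simp only [Finset.mem_filter, Finset.mem_product, Finset.mem_singleton,
      SimpleGraph.boxProd_adj]
    constructor
    · rintro ⟨⟨hy, rfl⟩, ⟨hxy, -⟩ | ⟨hww, -⟩⟩
      · exact ⟨⟨hy, hxy⟩, rfl⟩
      · exact absurd hww H.irrefl
    · rintro ⟨⟨hy, hxy⟩, rfl⟩
      exact ⟨⟨hy, rfl⟩, Or.inl ⟨hxy, rfl⟩⟩
  rw [nbrCount, this, Finset.card_product, Finset.card_singleton, mul_one, nbrCount]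

lemma nbrCount_boxProd_prod_singleton_of_ne {x : V} {c : Finset V} (hx : x ∉ c) {w v : W}
    (hwv : w ≠ v) : nbrCount (G □ H) (x, w) (c ×ˢ {v}) = 0 := by
  rw [nbrCount, Finset.card_eq_zero, Finset.filter_eq_empty_iff]
  simp only [Finset.mem_product, Finset.mem_singleton, SimpleGraph.boxProd_adj]
  rintro ⟨y, u⟩ ⟨hy, rfl⟩ (⟨-, hwu⟩ | ⟨-, rfl⟩)
  exacts [hwv hwu, hx hy]

variable [Fintype W] {C : ι → Finset V} {D : Finset V}

lemma switchesAt_boxProd_iff (hCD : ∀ i, Disjoint (C i) D) {x y : V} {w u : W} :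
    SwitchesAt (G □ H) (fun c : ι × W => C c.1 ×ˢ {c.2}) (D ×ˢ Finset.univ) (x, w) (y, u) ↔
      w = u ∧ SwitchesAt G C D x y := by
  simp only [SwitchesAt, Prod.exists, Finset.mem_product, Finset.mem_singleton,
    Finset.mem_univ, and_true, Finset.card_product, Finset.card_singleton, mul_one]
  constructor
  · rintro ⟨i, v, hx, ⟨hy, rfl⟩, hcount⟩
    obtain rfl : w = u := by
      by_contra hwu
      rw [nbrCount_boxProd_prod_singleton_of_ne (Finset.disjoint_right.mp (hCD i) hx) hwu]
        at hcount
      exact Finset.ne_empty_of_mem hy (Finset.card_eq_zero.mp hcount.symm)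
    rw [nbrCount_boxProd_prod_singleton_self] at hcount
    exact ⟨rfl, i, hx, hy, hcount⟩
  · rintro ⟨rfl, i, hx, hy, hcount⟩
    exact ⟨i, w, hx, ⟨hy, rfl⟩, by rwa [nbrCount_boxProd_prod_singleton_self]⟩

theorem boxProd_prod_singleton (hCD : ∀ i, Disjoint (C i) D) :
    GMswitch (G □ H) (fun c : ι × W => C c.1 ×ˢ {c.2}) (D ×ˢ Finset.univ) =
      GMswitch G C D □ H := by
  ext ⟨x, w⟩ ⟨y, u⟩
  rw [adj_iff, SimpleGraph.boxProd_adj, SimpleGraph.boxProd_adj, adj_iff,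
    switchesAt_boxProd_iff hCD, switchesAt_boxProd_iff hCD]
  by_cases hwu : w = u
  · subst hwu
    simp only [SimpleGraph.irrefl, ne_eq, Prod.mk.injEq, and_true, true_and, false_and, or_false]
  · simp only [hwu, Ne.symm hwu, ne_eq, Prod.mk.injEq, and_false, false_and, or_false,
      not_false_eq_true, true_and, false_or, xor_def]
    tauto

end GMswitch

/-- the Doob graph `D(1,n) = Sh □ H(n,4)` is isomorphic to the
switch of `H(n+2,4) = H(2,4) □ H(n,4)` with respect to the induced
Godsil–McKay partition. -/
theorem doob_one_n_eq_switch_hamming (n : ℕ) :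
    Nonempty (SimpleGraph.boxProd Shrikhande (HamGraph n)
      ≃g GMswitch (SimpleGraph.boxProd H24 (HamGraph n))
          (fun c : Fin 1 × (Fin n → Fin 4) =>
            diagC ×ˢ ({c.2} : Finset (Fin n → Fin 4)))
          (diagCᶜ ×ˢ (Finset.univ : Finset (Fin n → Fin 4)))) := by
  rw [GMswitch.boxProd_prod_singleton (C := fun _ : Fin 1 => diagC)
    fun _ => disjoint_compl_right]
  exact ⟨.refl⟩
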